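/- Let 1 ≤ d < n be integers, let P ∈ ℝ^{d×n} have invertible leading d×d block P_I, set Q := P_I^{-1} P_II, and let α ≥ β ≥ 0, μ ∈ [0,α], ν ∈ [0,β]. Then there exists a constant C > 0, independent of K, L and of the coefficient family, such that for all positive integers K, L and every family c : ℤ^n → ℂ, (Σ_{k ∈ ℤ^n ∖ 𝒦_{K,L}} (1 + ‖k_I + Q k_II‖^{2μ} + ‖k_II‖^{2ν}) |c_k|²)^{1/2} ≤ C [ K^{−α}(K^{μ}+L^{ν}) (Σ_{k∈ℤ^n} (1+‖P k‖^{2α})|c_k|²)^{1/2} + L^{−β}(K^{μ}+L^{ν}) (Σ_{k∈ℤ^n} (1+‖k‖^{2β})|c_k|²)^{1/2} ]. -/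

import Mathlib

/-!
Put `a = ‖k_I + Q k_II‖`, `b = ‖k_II‖` and `T = K^{-2α} a^{2α} + L^{-2β} b^{2β}`. Off `𝒦_{K,L}` we
have `a ≥ K` or `b ≥ L`, so `T ≥ 1`. Since `μ ≤ α`, `a^{2μ} ≤ K^{2μ} max(1, (a/K)^{2α}) ≤ K^{2μ} T`,
and likewise `b^{2ν} ≤ L^{2ν} T`, so the weight `1 + a^{2μ} + b^{2ν}` is at most `(K^μ + L^ν)² T`.
Finally `k_I + Q k_II = P_I⁻¹ P k` gives `a ≤ c₀ ‖P k‖` with `c₀ = 1 + ‖P_I⁻¹‖`, and `b ≤ ‖k‖`,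
so `T` is bounded by the two weights on the right-hand side. Summing against `|c_k|²` and using
subadditivity of the square root gives the estimate with `C = c₀^α`.
-/

open scoped ENNReal

/-- Euclidean norm of a vector in `ℝ^m`. -/
noncomputable def euclNorm {m : ℕ} (x : Fin m → ℝ) : ℝ :=
  ‖(EuclideanSpace.equiv (Fin m) ℝ).symm x‖

/-- Mixed weight `‖k_I + Q k_II‖^(2α) + ‖k_II‖^(2β)` (real powers, `0⁰ = 1`). -/
noncomputable def wMix (d m : ℕ) (Q : Matrix (Fin d) (Fin m) ℝ) (α β : ℝ)
    (k : Fin (d + m) → ℤ) : ℝ :=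
  euclNorm ((fun i => (k (Fin.castAdd m i) : ℝ)) +
      Q.mulVec fun j => (k (Fin.natAdd d j) : ℝ)) ^ (2 * α) +
    euclNorm (fun j => (k (Fin.natAdd d j) : ℝ)) ^ (2 * β)

/-- Weight `‖P k‖^(2α)`. -/
noncomputable def wP (d m : ℕ) (P : Matrix (Fin d) (Fin (d + m)) ℝ) (α : ℝ)
    (k : Fin (d + m) → ℤ) : ℝ :=
  euclNorm (P.mulVec fun i => (k i : ℝ)) ^ (2 * α)

/-- Weight `‖k‖^(2β)`. -/
noncomputable def wFull (d m : ℕ) (β : ℝ) (k : Fin (d + m) → ℤ) : ℝ :=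
  euclNorm (fun i => (k i : ℝ)) ^ (2 * β)

/-- Membership in the parallelogram index set `𝒦_{K,L}`:
each component of `k_I + Q k_II` lies in `[-K, K)` and each component of `k_II` in `[-L, L)`. -/
def memK (d m : ℕ) (Q : Matrix (Fin d) (Fin m) ℝ) (K L : ℕ) (k : Fin (d + m) → ℤ) : Prop :=
  (∀ i : Fin d,
      -(K : ℝ) ≤ (k (Fin.castAdd m i) : ℝ) + Q.mulVec (fun j => (k (Fin.natAdd d j) : ℝ)) i ∧
      (k (Fin.castAdd m i) : ℝ) + Q.mulVec (fun j => (k (Fin.natAdd d j) : ℝ)) i < (K : ℝ)) ∧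
  (∀ j : Fin m, -(L : ℤ) ≤ k (Fin.natAdd d j) ∧ k (Fin.natAdd d j) < (L : ℤ))

open scoped Matrix

namespace Real

lemma rpow_neg_mul_rpow {K a r : ℝ} (hK : 0 ≤ K) (ha : 0 ≤ a) :
    K ^ (-r) * a ^ r = (a / K) ^ r := by
  rw [div_rpow ha hK, rpow_neg hK, inv_mul_eq_div]

lemma rpow_le_rpow_mul_max {K a p r : ℝ} (hK : 0 < K) (ha : 0 ≤ a) (hp : 0 ≤ p) (hpr : p ≤ r) :
    a ^ p ≤ K ^ p * max 1 (K ^ (-r) * a ^ r) := by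
  rcases le_total a K with haK | hKa
  · calc a ^ p ≤ K ^ p * 1 := by rw [mul_one]; exact rpow_le_rpow ha haK hp
      _ ≤ _ := by gcongr; exact le_max_left _ _
  · have hone : 1 ≤ a / K := (one_le_div hK).mpr hKa
    calc a ^ p = K ^ p * (a / K) ^ p := by
          rw [div_rpow ha hK.le, mul_div_cancel₀ _ (rpow_pos_of_pos hK p).ne']
      _ ≤ K ^ p * (a / K) ^ r := by gcongr
      _ ≤ _ := by rw [← rpow_neg_mul_rpow hK.le ha]; gcongr; exact le_max_right _ _

lemma rpow_two_mul {x : ℝ} (hx : 0 ≤ x) (y : ℝ) : x ^ (2 * y) = (x ^ y) ^ 2 := by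
  rw [mul_comm, rpow_mul hx, rpow_two]

end Real

lemma one_add_rpow_add_rpow_le {K L a b p q r s : ℝ} (hK : 0 < K) (hL : 0 < L) (ha : 0 ≤ a)
    (hb : 0 ≤ b) (hp : 0 ≤ p) (hpr : p ≤ r) (hq : 0 ≤ q) (hqs : q ≤ s) (hout : K ≤ a ∨ L ≤ b) :
    1 + (a ^ p + b ^ q) ≤ (1 + K ^ p + L ^ q) * (K ^ (-r) * a ^ r + L ^ (-s) * b ^ s) := by
  set T := K ^ (-r) * a ^ r + L ^ (-s) * b ^ s
  have hA : 0 ≤ K ^ (-r) * a ^ r := by positivity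
  have hB : 0 ≤ L ^ (-s) * b ^ s := by positivity
  have hT : 1 ≤ T := by
    rcases hout with hKa | hLb
    · have : 1 ≤ K ^ (-r) * a ^ r := by
        rw [Real.rpow_neg_mul_rpow hK.le ha]
        exact Real.one_le_rpow ((one_le_div hK).mpr hKa) (hp.trans hpr)
      linarith
    · have : 1 ≤ L ^ (-s) * b ^ s := by
        rw [Real.rpow_neg_mul_rpow hL.le hb]
        exact Real.one_le_rpow ((one_le_div hL).mpr hLb) (hq.trans hqs)
      linarith
  have haT : a ^ p ≤ K ^ p * T :=
    (Real.rpow_le_rpow_mul_max hK ha hp hpr).trans (by gcongr; exact max_le hT (by linarith))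
  have hbT : b ^ q ≤ L ^ q * T :=
    (Real.rpow_le_rpow_mul_max hL hb hq hqs).trans (by gcongr; exact max_le hT (by linarith))
  linarith

lemma euclNorm_nonneg {n : ℕ} (x : Fin n → ℝ) : 0 ≤ euclNorm x := norm_nonneg _

lemma abs_le_euclNorm {n : ℕ} (x : Fin n → ℝ) (i : Fin n) : |x i| ≤ euclNorm x := by
  simpa [euclNorm] using PiLp.norm_apply_le ((EuclideanSpace.equiv (Fin n) ℝ).symm x) i

lemma euclNorm_natAdd_le {d m : ℕ} (x : Fin (d + m) → ℝ) :
    euclNorm (fun j => x (Fin.natAdd d j)) ≤ euclNorm x := by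
  simp only [euclNorm, EuclideanSpace.norm_eq]
  gcongr
  rw [Fin.sum_univ_add]
  exact le_add_of_nonneg_left (Finset.sum_nonneg fun _ _ => sq_nonneg _)

open scoped Matrix.Norms.L2Operator in
lemma exists_euclNorm_mulVec_le {n k : ℕ} (A : Matrix (Fin n) (Fin k) ℝ) :
    ∃ c : ℝ, 1 ≤ c ∧ ∀ y, euclNorm (A *ᵥ y) ≤ c * euclNorm y :=
  ⟨1 + ‖A‖, le_add_of_nonneg_right (norm_nonneg A), fun y =>
    (A.l2_opNorm_mulVec (WithLp.toLp 2 y)).trans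
      (by gcongr; exacts [le_add_of_nonneg_left zero_le_one, le_rfl])⟩

lemma Matrix.mulVec_eq_castAdd_add_natAdd {R ι : Type*} [Fintype ι] [NonUnitalNonAssocSemiring R]
    {d m : ℕ} (P : Matrix ι (Fin (d + m)) R) (x : Fin (d + m) → R) :
    P *ᵥ x = P.submatrix id (Fin.castAdd m) *ᵥ (fun i => x (Fin.castAdd m i)) +
      P.submatrix id (Fin.natAdd d) *ᵥ (fun j => x (Fin.natAdd d j)) := by
  funext i
  simp [Matrix.mulVec, dotProduct, Fin.sum_univ_add]

lemma inv_mulVec_mulVec_eq_add {R : Type*} [CommRing R] {d m : ℕ}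
    {P : Matrix (Fin d) (Fin (d + m)) R} {PI : Matrix (Fin d) (Fin d) R}
    {PII Q : Matrix (Fin d) (Fin m) R} (hPI : PI = P.submatrix id (Fin.castAdd m))
    (hPII : PII = P.submatrix id (Fin.natAdd d)) (hinv : IsUnit PI) (hQ : Q = PI⁻¹ * PII)
    (x : Fin (d + m) → R) :
    PI⁻¹ *ᵥ (P *ᵥ x) = (fun i => x (Fin.castAdd m i)) + Q *ᵥ fun j => x (Fin.natAdd d j) := by
  rw [P.mulVec_eq_castAdd_add_natAdd, ← hPI, ← hPII, Matrix.mulVec_add, Matrix.mulVec_mulVec,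
    Matrix.mulVec_mulVec, Matrix.nonsing_inv_mul _ ((Matrix.isUnit_iff_isUnit_det PI).mp hinv),
    Matrix.one_mulVec, hQ]

lemma le_euclNorm_or_le_euclNorm_of_not_memK {d m : ℕ} {Q : Matrix (Fin d) (Fin m) ℝ}
    {K L : ℕ} {k : Fin (d + m) → ℤ} (hk : ¬ memK d m Q K L k) :
    (K : ℝ) ≤ euclNorm ((fun i => (k (Fin.castAdd m i) : ℝ)) +
        Q *ᵥ fun j => (k (Fin.natAdd d j) : ℝ)) ∨
      (L : ℝ) ≤ euclNorm fun j => (k (Fin.natAdd d j) : ℝ) := by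
  simp only [memK, not_and_or, not_forall] at hk
  rcases hk with ⟨i, hi⟩ | ⟨j, hj⟩
  · refine .inl (le_trans ?_ (abs_le_euclNorm _ i))
    rw [le_abs', Pi.add_apply]
    simp only [not_le, not_lt] at hi
    rcases hi with h | h
    · exact .inl (by linarith)
    · exact .inr h
  · refine .inr (le_trans ?_ (abs_le_euclNorm _ j))
    have hLk : (L : ℤ) ≤ |k (Fin.natAdd d j)| := by rw [le_abs']; omega
    exact_mod_cast hLk

lemma exists_euclNorm_add_mulVec_le {d m : ℕ} {P : Matrix (Fin d) (Fin (d + m)) ℝ}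
    {PI : Matrix (Fin d) (Fin d) ℝ} {PII Q : Matrix (Fin d) (Fin m) ℝ}
    (hPI : PI = P.submatrix id (Fin.castAdd m)) (hPII : PII = P.submatrix id (Fin.natAdd d))
    (hinv : IsUnit PI) (hQ : Q = PI⁻¹ * PII) :
    ∃ c : ℝ, 1 ≤ c ∧ ∀ x : Fin (d + m) → ℝ,
      euclNorm ((fun i => x (Fin.castAdd m i)) + Q *ᵥ fun j => x (Fin.natAdd d j)) ≤
        c * euclNorm (P *ᵥ x) := by
  obtain ⟨c, hc1, hc⟩ := exists_euclNorm_mulVec_le PI⁻¹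
  exact ⟨c, hc1, fun x => inv_mulVec_mulVec_eq_add hPI hPII hinv hQ x ▸ hc (P *ᵥ x)⟩

lemma euclNorm_add_mulVec_rpow_le_mul_wP {d m : ℕ} {P : Matrix (Fin d) (Fin (d + m)) ℝ}
    {Q : Matrix (Fin d) (Fin m) ℝ} {c : ℝ} (hc1 : 1 ≤ c)
    (hc : ∀ x : Fin (d + m) → ℝ,
      euclNorm ((fun i => x (Fin.castAdd m i)) + Q *ᵥ fun j => x (Fin.natAdd d j)) ≤
        c * euclNorm (P *ᵥ x))
    {α : ℝ} (hα : 0 ≤ α) (k : Fin (d + m) → ℤ) :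
    euclNorm ((fun i => (k (Fin.castAdd m i) : ℝ)) + Q *ᵥ fun j => (k (Fin.natAdd d j) : ℝ)) ^
        (2 * α) ≤ c ^ (2 * α) * wP d m P α k :=
  calc _ ≤ (c * euclNorm (P *ᵥ fun i => (k i : ℝ))) ^ (2 * α) :=
        Real.rpow_le_rpow (euclNorm_nonneg _) (hc fun i => (k i : ℝ)) (by positivity)
    _ = c ^ (2 * α) * wP d m P α k := Real.mul_rpow (by linarith) (euclNorm_nonneg _)

lemma euclNorm_natAdd_rpow_le_wFull {d m : ℕ} {β : ℝ} (hβ : 0 ≤ β) (k : Fin (d + m) → ℤ) :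
    euclNorm (fun j => (k (Fin.natAdd d j) : ℝ)) ^ (2 * β) ≤ wFull d m β k :=
  Real.rpow_le_rpow (euclNorm_nonneg _) (euclNorm_natAdd_le fun i => (k i : ℝ)) (by positivity)

lemma one_add_wMix_le {d m : ℕ} {P : Matrix (Fin d) (Fin (d + m)) ℝ}
    {Q : Matrix (Fin d) (Fin m) ℝ} {c : ℝ} (hc1 : 1 ≤ c)
    (hc : ∀ x : Fin (d + m) → ℝ,
      euclNorm ((fun i => x (Fin.castAdd m i)) + Q *ᵥ fun j => x (Fin.natAdd d j)) ≤
        c * euclNorm (P *ᵥ x))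
    {α β μ ν : ℝ} (hμ0 : 0 ≤ μ) (hμ : μ ≤ α) (hν0 : 0 ≤ ν) (hν : ν ≤ β)
    {K L : ℕ} (hK : 0 < K) (hL : 0 < L) {k : Fin (d + m) → ℤ} (hk : ¬ memK d m Q K L k) :
    1 + wMix d m Q μ ν k ≤
      (c ^ α * (K : ℝ) ^ (-α) * ((K : ℝ) ^ μ + (L : ℝ) ^ ν)) ^ 2 * (1 + wP d m P α k) +
        (c ^ α * (L : ℝ) ^ (-β) * ((K : ℝ) ^ μ + (L : ℝ) ^ ν)) ^ 2 * (1 + wFull d m β k) := by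
  have hK1 : (1 : ℝ) ≤ K := Nat.one_le_cast.mpr hK
  have hL1 : (1 : ℝ) ≤ L := Nat.one_le_cast.mpr hL
  have hα : 0 ≤ α := hμ0.trans hμ
  have hβ : 0 ≤ β := hν0.trans hν
  set a :=
    euclNorm ((fun i => (k (Fin.castAdd m i) : ℝ)) + Q *ᵥ fun j => (k (Fin.natAdd d j) : ℝ))
  set b := euclNorm fun j => (k (Fin.natAdd d j) : ℝ)
  have ha0 : 0 ≤ a := euclNorm_nonneg _
  have hb0 : 0 ≤ b := euclNorm_nonneg _
  have hM : 1 ≤ c ^ (2 * α) := Real.one_le_rpow hc1 (by positivity)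
  have hwFull : 0 ≤ wFull d m β k := Real.rpow_nonneg (euclNorm_nonneg _) _
  have ha : a ^ (2 * α) ≤ c ^ (2 * α) * (1 + wP d m P α k) :=
    (euclNorm_add_mulVec_rpow_le_mul_wP hc1 hc hα k).trans (by gcongr; linarith)
  have hb : b ^ (2 * β) ≤ c ^ (2 * α) * (1 + wFull d m β k) :=
    (euclNorm_natAdd_rpow_le_wFull hβ k).trans (by nlinarith)
  have hS : 1 + (K : ℝ) ^ (2 * μ) + (L : ℝ) ^ (2 * ν) ≤ ((K : ℝ) ^ μ + (L : ℝ) ^ ν) ^ 2 := by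
    rw [Real.rpow_two_mul (by positivity), Real.rpow_two_mul (by positivity)]
    nlinarith [Real.one_le_rpow hK1 hμ0, Real.one_le_rpow hL1 hν0]
  calc 1 + wMix d m Q μ ν k = 1 + (a ^ (2 * μ) + b ^ (2 * ν)) := rfl
    _ ≤ (1 + (K : ℝ) ^ (2 * μ) + (L : ℝ) ^ (2 * ν)) *
          ((K : ℝ) ^ (-(2 * α)) * a ^ (2 * α) + (L : ℝ) ^ (-(2 * β)) * b ^ (2 * β)) :=
        one_add_rpow_add_rpow_le (by positivity) (by positivity) ha0 hb0 (by positivity)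
          (by linarith) (by positivity) (by linarith) (le_euclNorm_or_le_euclNorm_of_not_memK hk)
    _ ≤ ((K : ℝ) ^ μ + (L : ℝ) ^ ν) ^ 2 *
          ((K : ℝ) ^ (-(2 * α)) * (c ^ (2 * α) * (1 + wP d m P α k)) +
            (L : ℝ) ^ (-(2 * β)) * (c ^ (2 * α) * (1 + wFull d m β k))) := by
        gcongr
    _ = _ := by
        rw [← mul_neg, ← mul_neg, Real.rpow_two_mul (by positivity),
          Real.rpow_two_mul (by positivity), Real.rpow_two_mul (by positivity)]
        ring

lemma tsum_ofReal_rpow_half_le {ι κ : Type*} {e : κ → ι} (he : Function.Injective e)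
    {f : κ → ℝ} {g h : ι → ℝ} {X Y : ℝ} (hX : 0 ≤ X) (hY : 0 ≤ Y)
    (hfgh : ∀ k, f k ≤ X ^ 2 * g (e k) + Y ^ 2 * h (e k)) :
    (∑' k, ENNReal.ofReal (f k)) ^ ((1 : ℝ) / 2) ≤
      ENNReal.ofReal X * (∑' i, ENNReal.ofReal (g i)) ^ ((1 : ℝ) / 2) +
        ENNReal.ofReal Y * (∑' i, ENNReal.ofReal (h i)) ^ ((1 : ℝ) / 2) := by
  have hpoint : ∀ k, ENNReal.ofReal (f k) ≤
      ENNReal.ofReal X ^ 2 * ENNReal.ofReal (g (e k)) +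
        ENNReal.ofReal Y ^ 2 * ENNReal.ofReal (h (e k)) := fun k => by
    rw [← ENNReal.ofReal_pow hX, ← ENNReal.ofReal_pow hY, ← ENNReal.ofReal_mul (sq_nonneg X),
      ← ENNReal.ofReal_mul (sq_nonneg Y)]
    exact (ENNReal.ofReal_le_ofReal (hfgh k)).trans ENNReal.ofReal_add_le
  have hsum : ∑' k, ENNReal.ofReal (f k) ≤
      ENNReal.ofReal X ^ 2 * ∑' i, ENNReal.ofReal (g i) +
        ENNReal.ofReal Y ^ 2 * ∑' i, ENNReal.ofReal (h i) :=
    calc ∑' k, ENNReal.ofReal (f k)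
        ≤ ∑' k, (ENNReal.ofReal X ^ 2 * ENNReal.ofReal (g (e k)) +
            ENNReal.ofReal Y ^ 2 * ENNReal.ofReal (h (e k))) := ENNReal.tsum_le_tsum hpoint
      _ = ENNReal.ofReal X ^ 2 * ∑' k, ENNReal.ofReal (g (e k)) +
            ENNReal.ofReal Y ^ 2 * ∑' k, ENNReal.ofReal (h (e k)) := by
          rw [ENNReal.tsum_add, ENNReal.tsum_mul_left, ENNReal.tsum_mul_left]
      _ ≤ _ := by
          gcongr <;> exact ENNReal.tsum_comp_le_tsum_of_injective he _
  have hsqrt : ∀ x y : ℝ≥0∞, (x ^ 2 * y) ^ ((1 : ℝ) / 2) = x * y ^ ((1 : ℝ) / 2) := fun x y => by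
    rw [ENNReal.mul_rpow_of_nonneg _ _ (by norm_num), one_div]
    congr 1
    exact_mod_cast ENNReal.pow_rpow_inv_natCast two_ne_zero x
  calc (∑' k, ENNReal.ofReal (f k)) ^ ((1 : ℝ) / 2)
      ≤ (ENNReal.ofReal X ^ 2 * ∑' i, ENNReal.ofReal (g i) +
          ENNReal.ofReal Y ^ 2 * ∑' i, ENNReal.ofReal (h i)) ^ ((1 : ℝ) / 2) := by
        gcongr
    _ ≤ _ := by
        rw [← hsqrt, ← hsqrt]
        exact ENNReal.rpow_add_le_add_rpow _ _ (by norm_num) (by norm_num)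

theorem stmt6_general (d m : ℕ)
    (P : Matrix (Fin d) (Fin (d + m)) ℝ)
    (PI : Matrix (Fin d) (Fin d) ℝ) (hPI : PI = P.submatrix id (Fin.castAdd m))
    (PII : Matrix (Fin d) (Fin m) ℝ) (hPII : PII = P.submatrix id (Fin.natAdd d))
    (hinv : IsUnit PI)
    (Q : Matrix (Fin d) (Fin m) ℝ) (hQ : Q = PI⁻¹ * PII)
    (α β μ ν : ℝ) (hμ0 : 0 ≤ μ) (hμ : μ ≤ α)
    (hν0 : 0 ≤ ν) (hν : ν ≤ β) :
    ∃ C : ℝ, 0 < C ∧ ∀ K L : ℕ, 0 < K → 0 < L → ∀ c : (Fin (d + m) → ℤ) → ℂ,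
      (∑' k : {k : Fin (d + m) → ℤ // ¬ memK d m Q K L k},
          ENNReal.ofReal ((1 + wMix d m Q μ ν k.1) * ‖c k.1‖ ^ 2)) ^ ((1 : ℝ) / 2) ≤
        ENNReal.ofReal (C * (K : ℝ) ^ (-α) * ((K : ℝ) ^ μ + (L : ℝ) ^ ν)) *
            (∑' k : Fin (d + m) → ℤ,
              ENNReal.ofReal ((1 + wP d m P α k) * ‖c k‖ ^ 2)) ^ ((1 : ℝ) / 2) +
          ENNReal.ofReal (C * (L : ℝ) ^ (-β) * ((K : ℝ) ^ μ + (L : ℝ) ^ ν)) *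
            (∑' k : Fin (d + m) → ℤ,
              ENNReal.ofReal ((1 + wFull d m β k) * ‖c k‖ ^ 2)) ^ ((1 : ℝ) / 2) := by
  obtain ⟨c₀, hc₀, hPc₀⟩ := exists_euclNorm_add_mulVec_le hPI hPII hinv hQ
  have hC : 0 < c₀ ^ α := Real.rpow_pos_of_pos (by linarith) α
  refine ⟨c₀ ^ α, hC, fun K L hK hL c => ?_⟩
  refine tsum_ofReal_rpow_half_le Subtype.val_injective (by positivity) (by positivity)
    fun k => ?_
  simpa only [add_mul, mul_assoc] using mul_le_mul_of_nonneg_right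
    (one_add_wMix_le hc₀ hPc₀ hμ0 hμ hν0 hν hK hL k.2) (sq_nonneg ‖c k.1‖)

/-- truncation error bound in the full norms
`‖u - P_{K,L}u‖_{μ,ν} ≤ C (K^{-α}(K^μ+L^ν) ‖u‖_α + L^{-β}(K^μ+L^ν) ‖U‖_{H^β})`. -/
theorem stmt6 (d m : ℕ) (hd : 1 ≤ d) (hm : 1 ≤ m)
    (P : Matrix (Fin d) (Fin (d + m)) ℝ)
    (PI : Matrix (Fin d) (Fin d) ℝ) (hPI : PI = P.submatrix id (Fin.castAdd m))
    (PII : Matrix (Fin d) (Fin m) ℝ) (hPII : PII = P.submatrix id (Fin.natAdd d))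
    (hinv : IsUnit PI)
    (Q : Matrix (Fin d) (Fin m) ℝ) (hQ : Q = PI⁻¹ * PII)
    (α β μ ν : ℝ) (hβ : 0 ≤ β) (hαβ : β ≤ α) (hμ0 : 0 ≤ μ) (hμ : μ ≤ α)
    (hν0 : 0 ≤ ν) (hν : ν ≤ β) :
    ∃ C : ℝ, 0 < C ∧ ∀ K L : ℕ, 0 < K → 0 < L → ∀ c : (Fin (d + m) → ℤ) → ℂ,
      (∑' k : {k : Fin (d + m) → ℤ // ¬ memK d m Q K L k},
          ENNReal.ofReal ((1 + wMix d m Q μ ν k.1) * ‖c k.1‖ ^ 2)) ^ ((1 : ℝ) / 2) ≤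
        ENNReal.ofReal (C * (K : ℝ) ^ (-α) * ((K : ℝ) ^ μ + (L : ℝ) ^ ν)) *
            (∑' k : Fin (d + m) → ℤ,
              ENNReal.ofReal ((1 + wP d m P α k) * ‖c k‖ ^ 2)) ^ ((1 : ℝ) / 2) +
          ENNReal.ofReal (C * (L : ℝ) ^ (-β) * ((K : ℝ) ^ μ + (L : ℝ) ^ ν)) *
            (∑' k : Fin (d + m) → ℤ,
              ENNReal.ofReal ((1 + wFull d m β k) * ‖c k‖ ^ 2)) ^ ((1 : ℝ) / 2) :=
  stmt6_general d m P PI hPI PII hPII hinv Q hQ α β μ ν hμ0 hμ hν0 hν
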